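/- arXiv:2209.13082 — 5 statements merged into one kernel-verified Lean document; each statement's English description precedes it below -/
import Mathlib

section
/- In the argument model generated from an epistemic model, for any world t ∈ S, there is no argument U with U ≤ {t} and not {t} ≤ U; that is, singletons are minimal in the strength preorder up to equivalence. -/
namespace Paper

variable {S P I : Type*}

/-- Possible arguments: nonempty subsets of the set of worlds. -/
abbrev Arg (S : Type*) := {U : Set S // U.Nonempty}

/-- Generated attack relation: `atk F p U V` means `(U,V) ∈ A(p)`, i.e. `V` attacks `U`
w.r.t. `p`: ∃ t ∈ U, ∀ r ∈ V, exactly one of t, r lies in F p. -/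
def atk (F : P → Set S) (p : P) (U V : Arg S) : Prop :=
  ∃ t ∈ U.1, ∀ r ∈ V.1, (t ∈ F p ∧ r ∉ F p) ∨ (t ∉ F p ∧ r ∈ F p)

/-- Strength preorder: `str F U V` means `U ≤ V` (U at least as strong as V). -/
def str (F : P → Set S) (U V : Arg S) : Prop :=
  ∀ (p : P) (W : Arg S), atk F p W V → atk F p W U

/-- The singleton argument {t}. -/
def sArg (t : S) : Arg S := ⟨{t}, Set.singleton_nonempty t⟩

/-- τ(t) = {U : {t} ≤ U}. -/
def tau (F : P → Set S) (t : S) : Set (Arg S) := {U | str F (sArg t) U}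

/-- A filter over a preorder-like relation `le`. -/
structure IsPFilter {α : Type*} (le : α → α → Prop) (F : Set α) : Prop where
  nonempty : F.Nonempty
  upward : ∀ U ∈ F, ∀ W, le U W → W ∈ F
  directed : ∀ U ∈ F, ∀ V ∈ F, ∃ W ∈ F, le W U ∧ le W V

/-- An ultrafilter over `le`: a proper filter maximal among filters under inclusion. -/
def IsUltra {α : Type*} (le : α → α → Prop) (F : Set α) : Prop :=
  IsPFilter le F ∧ F ≠ Set.univ ∧ ∀ G, IsPFilter le G → F ⊆ G → G = F

/-- Strength preorder on an abstract argument model with attack `A`. -/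
def le' {W P : Type*} (A : P → W → W → Prop) (U V : W) : Prop :=
  ∀ p X, A p X V → A p X U

/-- Availability in the argument model generated at world `s`:
`G(i) = {U | [s]_i ⊆ U}`. -/
def Gav (E : I → S → S → Prop) (s : S) (i : I) : Set (Arg S) :=
  {U | ∀ u, E i s u → u ∈ U.1}

/-- singletons are minimal in the strength preorder up to equivalence. -/
theorem singleton_minimal (F : P → Set S) (t : S) :
    ¬ ∃ U : Arg S, str F U (sArg t) ∧ ¬ str F (sArg t) U := by
  rintro ⟨U, hU, hnot⟩
  apply hnot
  intro p W hW
  obtain ⟨w, hwW, hw⟩ := hW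
  by_cases hwt : (w ∈ F p ∧ t ∉ F p) ∨ (w ∉ F p ∧ t ∈ F p)
  · exact ⟨w, hwW, fun r hr => by rw [Set.mem_singleton_iff.mp hr]; exact hwt⟩
  · exfalso
    obtain ⟨r, hrU⟩ := U.2
    have hwr := hw r hrU
    -- w agrees with t, w differs from r, so t differs from r
    have htr : (r ∈ F p ∧ t ∉ F p) ∨ (r ∉ F p ∧ t ∈ F p) := by tauto
    have hatk : atk F p ⟨{r}, Set.singleton_nonempty r⟩ (sArg t) :=
      ⟨r, rfl, fun x hx => by simp [sArg] at hx; subst hx; exact htr⟩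
    obtain ⟨s, hs, hall⟩ := hU p _ hatk
    simp at hs; subst hs
    have := hall s hrU
    tauto

end Paper
end

section
/- For any t ∈ S, if the generated argument model is nontrivial (some ultrafilter over the strength preorder exists), then the principal set τ(t) = {U ∈ 𝕎 : {t} ≤ U} is an ultrafilter over the strength preorder ≤. -/
namespace Paper

variable {S P I : Type*}

lemma str_refl (F : P → Set S) (U : Arg S) : str F U U := fun _ _ h => h

lemma str_trans {F : P → Set S} {U V W : Arg S} (h1 : str F U V) (h2 : str F V W) :
    str F U W := fun p X h => h1 p X (h2 p X h)

lemma sArg_mem_tau (F : P → Set S) (t : S) : sArg t ∈ tau F t := str_refl F _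

lemma tau_isPFilter (F : P → Set S) (t : S) : IsPFilter (str F) (tau F t) where
  nonempty := ⟨sArg t, sArg_mem_tau F t⟩
  upward := fun _ hU _ hUW => str_trans hU hUW
  directed := fun _ hU _ hV => ⟨sArg t, sArg_mem_tau F t, hU, hV⟩

lemma tau_max (F : P → Set S) (t : S) {G : Set (Arg S)} (hG : IsPFilter (str F) G)
    (hsub : tau F t ⊆ G) : G = tau F t := by
  apply Set.Subset.antisymm _ hsub
  intro U hU
  intro p X hX
  obtain ⟨x, hxX, hsep⟩ := hX
  by_cases hxt : (x ∈ F p ∧ t ∉ F p) ∨ (x ∉ F p ∧ t ∈ F p)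
  · exact ⟨x, hxX, fun r hr => by
      rcases hr with rfl
      exact hxt⟩
  · exfalso
    -- t agrees with x on F p
    obtain ⟨u, hu⟩ := U.2
    have huo := hsep u hu
    obtain ⟨W, hWG, hWt, hWU⟩ := hG.directed (sArg t) (hsub (sArg_mem_tau F t)) U hU
    -- sArg t attacks sArg u
    have h1 : atk F p (sArg u) (sArg t) := by
      refine ⟨u, rfl, fun r hr => ?_⟩
      rcases hr with rfl
      tauto
    have h2 := hWt p (sArg u) h1
    -- U attacks sArg x
    have h3 : atk F p (sArg x) U := ⟨x, rfl, hsep⟩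
    have h4 := hWU p (sArg x) h3
    obtain ⟨u', hu', hopp1⟩ := h2
    obtain ⟨x', hx', hopp2⟩ := h4
    rcases hu' with rfl
    rcases hx' with rfl
    obtain ⟨w, hw⟩ := W.2
    have c1 := hopp1 w hw
    have c2 := hopp2 w hw
    tauto

/-- if some ultrafilter over ≤ exists, then τ(t) is an ultrafilter. -/
theorem tau_isUltra (F : P → Set S) (t : S)
    (hnontrivial : ∃ 𝕌 : Set (Arg S), IsUltra (str F) 𝕌) :
    IsUltra (str F) (tau F t) := by
  refine ⟨tau_isPFilter F t, ?_, fun G hG hsub => tau_max F t hG hsub⟩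
  intro htau
  obtain ⟨𝕌, h𝕌f, h𝕌ne, h𝕌max⟩ := hnontrivial
  have := h𝕌max (tau F t) (tau_isPFilter F t) (htau ▸ Set.subset_univ _)
  exact h𝕌ne (this ▸ htau)

end Paper
end

section
/- (Atomic invariance, Lemma on base case) Suppose every proposition p satisfies s ∈ F(p) at the designated world s. Then for any t ∈ S and any p ∈ P: the principal ultrafilter τ(t) satisfies p in the twice-generated epistemic model iff t ∈ F(p). Concretely: (∃ U ∈ τ(t), ∀ V ∈ τ(t), V ≤ U → (V,{s}) ∉ A(p)) ↔ t ∈ F(p). -/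
namespace Paper

variable {S P I : Type*}

/-- base-case lemma: assuming s satisfies every proposition,
τ(t) satisfies p in the twice-generated model iff t ∈ F p. -/
theorem atomic_invariance (F : P → Set S) (s : S) (hs : ∀ p, s ∈ F p)
    (t : S) (p : P) :
    (∃ U ∈ tau F t, ∀ V ∈ tau F t, str F V U → ¬ atk F p V (sArg s)) ↔
      t ∈ F p := by
  constructor
  · rintro ⟨U, hU, hmax⟩
    have hself : sArg t ∈ tau F t := fun q W h => h
    have := hmax (sArg t) hself hU
    by_contra ht
    exact this ⟨t, rfl, fun r hr => by
      rcases hr with rfl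
      exact Or.inr ⟨ht, hs p⟩⟩
  · intro ht
    refine ⟨sArg t, fun q W h => h, ?_⟩
    intro V hV hVt hatk
    rcases hatk with ⟨x, hxV, hx⟩
    have hxnp : x ∉ F p := by
      rcases hx s rfl with ⟨_, hsn⟩ | ⟨hxn, _⟩
      · exact absurd (hs p) hsn
      · exact hxn
    -- sArg x attacks sArg t, hence attacks V
    have h1 : atk F p (sArg x) (sArg t) :=
      ⟨x, rfl, fun r hr => by rcases hr with rfl; exact Or.inr ⟨hxnp, ht⟩⟩
    have h2 : atk F p (sArg x) V := hVt p (sArg x) h1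
    rcases h2 with ⟨y, hy, hy2⟩
    have hyx : y = x := hy
    rcases hy2 x hxV with ⟨hyp, _⟩ | ⟨_, hxp⟩
    · exact hxnp (hyx ▸ hyp)
    · exact hxnp hxp

end Paper
end

section
/- (Zig lemma) If (s,t) ∈ E(i) in the original epistemic model, then the principal ultrafilters are epistemically related in the generated model: τ(s) ∩ G(i) = τ(t) ∩ G(i), where G(i) = {U ∈ 𝕎 : [s]_i ⊆ U} and [s]_i is the E(i)-equivalence class of s. -/
namespace Paper

variable {S P I : Type*}

/-- If x ∈ U then {x} ≤ U. -/
lemma mem_tau_of_mem (F : P → Set S) (x : S) (U : Arg S) (hx : x ∈ U.1) :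
    U ∈ tau F x := by
  intro p W hW
  obtain ⟨w, hwW, hw⟩ := hW
  exact ⟨w, hwW, fun r hr => by rw [sArg, Set.mem_singleton_iff] at hr; exact hr ▸ hw x hx⟩

/-- zig lemma: if (s,t) ∈ E(i) then τ(s) and τ(t) agree on G(i). -/
theorem zig_lemma (E : I → S → S → Prop) (hE : ∀ i, Equivalence (E i))
    (F : P → Set S) (s t : S) (i : I) (hst : E i s t) :
    tau F s ∩ Gav E s i = tau F t ∩ Gav E s i := by
  ext U
  constructor
  · rintro ⟨-, hG⟩
    exact ⟨mem_tau_of_mem F t U (hG t hst), hG⟩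
  · rintro ⟨-, hG⟩
    exact ⟨mem_tau_of_mem F s U (hG s ((hE i).refl s)), hG⟩

end Paper
end

section
/- (Zag lemma, negative case) Assume s ∈ F(p) for all p. Let 𝕌 be any ultrafilter over ≤ with 𝕌 ∩ G(i) = τ(s) ∩ G(i). If 𝕌 does not satisfy p in the generated valuation (∀ U ∈ 𝕌 ∃ V ∈ 𝕌, V ≤ U ∧ (V,{s}) ∈ A(p)), then there exists t ∈ S with (s,t) ∈ E(i) and t ∉ F(p). -/
namespace Paper

variable {S P I : Type*}

/-- zag lemma, negative case. -/
theorem zag_lemma_neg (E : I → S → S → Prop) (hE : ∀ i, Equivalence (E i))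
    (F : P → Set S) (s : S) (hs : ∀ q, s ∈ F q) (i : I) (p : P)
    (𝕌 : Set (Arg S)) (hU : IsUltra (str F) 𝕌)
    (hagree : 𝕌 ∩ Gav E s i = tau F s ∩ Gav E s i)
    (hfail : ∀ U ∈ 𝕌, ∃ V ∈ 𝕌, str F V U ∧ atk F p V (sArg s)) :
    ∃ t, E i s t ∧ t ∉ F p := by
  by_contra hcon
  push_neg at hcon
  -- U₀ = [s]_i
  set U₀ : Arg S := ⟨{u | E i s u}, ⟨s, (hE i).refl s⟩⟩ with hU₀
  have hGav : U₀ ∈ Gav E s i := fun u hu => hu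
  have hTau : U₀ ∈ tau F s := by
    intro p' W hatt
    obtain ⟨t, htW, ht⟩ := hatt
    have hts := ht s ((hE i).refl s)
    have htn : t ∉ F p' := by
      rcases hts with ⟨_, h2⟩ | ⟨h1, _⟩
      · exact absurd (hs p') h2
      · exact h1
    refine ⟨t, htW, fun r hr => Or.inr ⟨htn, ?_⟩⟩
    have : r = s := hr
    subst this; exact hs p'
  have hU₀mem : U₀ ∈ 𝕌 := by
    have : U₀ ∈ tau F s ∩ Gav E s i := ⟨hTau, hGav⟩
    rw [← hagree] at this
    exact this.1
  obtain ⟨V, hV, hstr, hatk⟩ := hfail U₀ hU₀mem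
  obtain ⟨t, htV, ht⟩ := hatk
  have htn : t ∉ F p := by
    rcases ht s rfl with ⟨_, h2⟩ | ⟨h1, _⟩
    · exact absurd (hs p) h2
    · exact h1
  have hVU₀ : atk F p V U₀ := ⟨t, htV, fun r hr => Or.inr ⟨htn, hcon r hr⟩⟩
  obtain ⟨t', ht'V, ht'⟩ := hstr p V hVU₀
  rcases ht' t' ht'V with ⟨h1, h2⟩ | ⟨h1, h2⟩
  exacts [h2 h1, h1 h2]

end Paper
end
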